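/- For every infinite-dimensional Banach space X, 1 < q ≤ 2, and α ∈ (0,1], one has 2^{−1/q*}·κ(X)^α ≤ λ_α(X, L_q), where 1/q + 1/q* = 1 and λ_α(X, L_q) is the optimal α-Hölder extension constant into L_q (possibly infinite). -/

import Mathlib

open Set Filter
open scoped ENNReal NNReal

noncomputable section

/-- The Kottman constant of a normed space: the supremum of separation constants
`sep (xₙ) = inf_{n ≠ m} ‖xₙ - xₘ‖` over sequences `(xₙ)` in the closed unit ball. -/
def kottman (X : Type*) [SeminormedAddGroup X] : ℝ :=
  sSup {r : ℝ | ∃ x : ℕ → X, (∀ n, ‖x n‖ ≤ 1) ∧ ∀ n m, n ≠ m → r ≤ ‖x n - x m‖}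

/-- `f` is α-Hölder with constant `K` on the set `M` (real exponent, via `Real.rpow`). -/
def HolderOnR {X Y : Type*} [SeminormedAddGroup X] [SeminormedAddGroup Y]
    (K α : ℝ) (f : X → Y) (M : Set X) : Prop :=
  ∀ x ∈ M, ∀ y ∈ M, ‖f x - f y‖ ≤ K * ‖x - y‖ ^ α

/-- `f` is globally α-Hölder with constant `K`. -/
def HolderR {X Y : Type*} [SeminormedAddGroup X] [SeminormedAddGroup Y]
    (K α : ℝ) (f : X → Y) : Prop :=
  ∀ x y, ‖f x - f y‖ ≤ K * ‖x - y‖ ^ α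

/-- The α-Hölder extension property with constant `l`: every α-Hölder map from a subset
of `X` into `Y` extends to `X` with Hölder constant multiplied by at most `l`. -/
def ExtProp (l α : ℝ) (X Y : Type*) [SeminormedAddGroup X] [SeminormedAddGroup Y] : Prop :=
  ∀ (M : Set X) (f : X → Y) (K : ℝ), 0 ≤ K → HolderOnR K α f M →
    ∃ F : X → Y, Set.EqOn F f M ∧ ∃ K' : ℝ, 0 ≤ K' ∧ HolderR K' α F ∧ K' ≤ l * K

/-- `λ_α(X, Y)`: the optimal α-Hölder extension constant from subsets of `X` into `Y`
(`∞` if no finite constant works). -/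
def holderExt (α : ℝ) (X Y : Type*) [SeminormedAddGroup X] [SeminormedAddGroup Y] : ℝ≥0∞ :=
  sInf {L : ℝ≥0∞ | ∃ l : ℝ, 0 ≤ l ∧ L = ENNReal.ofReal l ∧ ExtProp l α X Y}

open MeasureTheory Finset

/-!
Take an `r`-separated sequence `xₙ` in the unit ball and send `xₙ ↦ r^α rₙ`, where the `rₙ` are
the Rademacher functions; since `‖rₙ - rₘ‖_q = 2^{1-1/q}`, this map is α-Hölder with constant
`2^{1-1/q}`. An extension `F` to all of `X` with constant `K` satisfies
`‖F 0 - r^α rₙ‖_q ≤ K` for every `n`. On the other hand no point of `L_q` is uniformly closer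
than `1` to all the `rₙ`: for `t = clamp(z, -1, 1)` one has `|z - ε| ≥ 1 - ε t` when
`ε = ±1`, so `∑_{n<N} ‖Z - rₙ‖₁ ≥ N - ‖∑_{n<N} rₙ‖₁ ≥ N - √N` by orthogonality. Hence
`r^α ≤ K ≤ λ 2^{1-1/q}`, and taking the supremum over `r` gives the bound with `κ(X)`.
-/

theorem kottman_nonneg (X : Type*) [SeminormedAddGroup X] : 0 ≤ kottman X := by
  refine le_csSup ⟨2, ?_⟩ ⟨fun _ => 0, by simp, by simp⟩
  rintro r ⟨x, hx, hsep⟩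
  calc r ≤ ‖x 0 - x 1‖ := hsep 0 1 zero_ne_one
    _ ≤ ‖x 0‖ + ‖x 1‖ := norm_sub_le _ _
    _ ≤ 2 := by linarith [hx 0, hx 1]

theorem kottman_rpow_le {X : Type*} [SeminormedAddGroup X] {α B : ℝ} (hα : 0 < α) (hB : 0 ≤ B)
    (h : ∀ r > 0, ∀ x : ℕ → X, (∀ n, ‖x n‖ ≤ 1) → (∀ n m, n ≠ m → r ≤ ‖x n - x m‖) →
      r ^ α ≤ B) :
    kottman X ^ α ≤ B := by
  rw [← Real.le_rpow_inv_iff_of_pos (kottman_nonneg X) hB hα]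
  refine Real.sSup_le ?_ (by positivity)
  rintro r ⟨x, hx, hsep⟩
  rcases le_or_gt r 0 with hr | hr
  · exact hr.trans (by positivity)
  · exact (Real.le_rpow_inv_iff_of_pos hr.le hB hα).mpr (h r hr x hx hsep)

theorem one_sub_mul_le_abs_sub {z ε : ℝ} (hε : ε = 1 ∨ ε = -1) :
    1 - ε * max (-1) (min z 1) ≤ |z - ε| := by
  rcases hε with rfl | rfl <;> grind

theorem card_sub_abs_sum_le_sum_abs_sub (z : ℝ) {ε : ℕ → ℝ} (hε : ∀ n, ε n = 1 ∨ ε n = -1)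
    (N : ℕ) : N - |∑ n ∈ range N, ε n| ≤ ∑ n ∈ range N, |z - ε n| := by
  set t := max (-1) (min z 1)
  have ht : |t| ≤ 1 := abs_le.mpr ⟨le_max_left _ _, max_le (by norm_num) (min_le_right _ _)⟩
  calc (N : ℝ) - |∑ n ∈ range N, ε n| ≤ N - t * ∑ n ∈ range N, ε n := by
        gcongr
        exact (le_abs_self _).trans <| by
          rw [abs_mul]; exact mul_le_of_le_one_left (abs_nonneg _) ht
    _ = ∑ n ∈ range N, (1 - ε n * t) := by simp [sum_sub_distrib, ← sum_mul, mul_comm]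
    _ ≤ ∑ n ∈ range N, |z - ε n| := sum_le_sum fun n _ => one_sub_mul_le_abs_sub (hε n)

theorem MeasureTheory.Lp.integral_norm_le_norm {Ω E : Type*} [MeasurableSpace Ω] {μ : Measure Ω}
    [IsProbabilityMeasure μ] [NormedAddCommGroup E] {p : ℝ≥0∞} [Fact (1 ≤ p)] (g : Lp E p μ) :
    ∫ ω, ‖g ω‖ ∂μ ≤ ‖g‖ := by
  rw [integral_norm_eq_lintegral_enorm (Lp.aestronglyMeasurable g),
    ← eLpNorm_one_eq_lintegral_enorm, Lp.norm_def]
  exact ENNReal.toReal_mono (Lp.eLpNorm_ne_top g)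
    (eLpNorm_le_eLpNorm_of_exponent_le Fact.out (Lp.aestronglyMeasurable g))

theorem MeasureTheory.Lp.integral_norm_sub_le_norm_sub_toLp {Ω E : Type*} [MeasurableSpace Ω]
    {μ : Measure Ω} [IsProbabilityMeasure μ] [NormedAddCommGroup E] {p : ℝ≥0∞} [Fact (1 ≤ p)]
    (g : Lp E p μ) {f : Ω → E} (hf : MemLp f p μ) :
    ∫ ω, ‖g ω - f ω‖ ∂μ ≤ ‖g - hf.toLp f‖ := by
  refine le_of_eq_of_le (integral_congr_ae ?_) (Lp.integral_norm_le_norm (g - hf.toLp f))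
  filter_upwards [Lp.coeFn_sub g (hf.toLp f), hf.coeFn_toLp] with ω hsub hfω
  rw [hsub, Pi.sub_apply, hfω]

theorem abs_sub_rpow_eq {a b : ℝ} (ha : a = 1 ∨ a = -1) (hb : b = 1 ∨ b = -1) {q : ℝ}
    (hq : 0 < q) : |a - b| ^ q = 2 ^ (q - 1) * (1 - a * b) := by
  rcases ha with rfl | rfl <;> rcases hb with rfl | rfl <;>
    norm_num [Real.zero_rpow hq.ne', Real.rpow_sub_one]

structure OrthogonalSigns {Ω : Type*} [MeasurableSpace Ω] (μ : Measure Ω) (R : ℕ → Ω → ℝ) :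
    Prop where
  measurable : ∀ n, Measurable (R n)
  eq_one_or_eq_neg_one : ∀ n ω, R n ω = 1 ∨ R n ω = -1
  integral_mul_eq_zero : Pairwise fun n m => ∫ ω, R n ω * R m ω ∂μ = 0

namespace OrthogonalSigns

variable {Ω : Type*} [MeasurableSpace Ω] {μ : Measure Ω} {R : ℕ → Ω → ℝ}

theorem mul_self (hR : OrthogonalSigns μ R) (n : ℕ) (ω : Ω) : R n ω * R n ω = 1 := by
  rcases hR.eq_one_or_eq_neg_one n ω with h | h <;> simp [h]

theorem abs_eq_one (hR : OrthogonalSigns μ R) (n : ℕ) (ω : Ω) : |R n ω| = 1 := by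
  rcases hR.eq_one_or_eq_neg_one n ω with h | h <;> simp [h]

theorem abs_sum_le (hR : OrthogonalSigns μ R) (N : ℕ) (ω : Ω) :
    |∑ n ∈ range N, R n ω| ≤ N :=
  (abs_sum_le_sum_abs _ _).trans_eq (by simp [hR.abs_eq_one])

variable [IsProbabilityMeasure μ]

theorem integrable_abs_sum (hR : OrthogonalSigns μ R) (N : ℕ) :
    Integrable (fun ω => |∑ n ∈ range N, R n ω|) μ :=
  .of_bound (Finset.measurable_sum _ fun n _ => hR.measurable n).abs.aestronglyMeasurable N
    (.of_forall fun ω => by simpa using hR.abs_sum_le N ω)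

theorem memLp (hR : OrthogonalSigns μ R) (n : ℕ) (p : ℝ≥0∞) : MemLp (R n) p μ :=
  .of_bound (hR.measurable n).aestronglyMeasurable 1 (.of_forall fun ω => (hR.abs_eq_one n ω).le)

theorem integrable_mul (hR : OrthogonalSigns μ R) (n m : ℕ) :
    Integrable (fun ω => R n ω * R m ω) μ :=
  .of_bound ((hR.measurable n).mul (hR.measurable m)).aestronglyMeasurable 1
    (.of_forall fun ω => by simp [hR.abs_eq_one])

theorem integral_mul (hR : OrthogonalSigns μ R) (n m : ℕ) :
    ∫ ω, R n ω * R m ω ∂μ = if n = m then 1 else 0 := by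
  split_ifs with h
  · simp [h, hR.mul_self]
  · exact hR.integral_mul_eq_zero h

theorem integral_sum_sq (hR : OrthogonalSigns μ R) (N : ℕ) :
    ∫ ω, (∑ n ∈ range N, R n ω) ^ 2 ∂μ = N := by
  simp_rw [sq, sum_mul_sum]
  rw [integral_finsetSum _ fun n _ => integrable_finsetSum _ fun m _ => hR.integrable_mul n m]
  simp_rw [integral_finsetSum _ fun m _ => hR.integrable_mul _ m, hR.integral_mul]
  rw [sum_congr rfl fun n hn => by rw [sum_ite_eq, if_pos hn]]
  simp

theorem integral_abs_sum_le (hR : OrthogonalSigns μ R) (N : ℕ) :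
    ∫ ω, |∑ n ∈ range N, R n ω| ∂μ ≤ √N := by
  rcases N.eq_zero_or_pos with rfl | hN
  · simp
  have hS : Measurable fun ω => ∑ n ∈ range N, R n ω :=
    Finset.measurable_sum _ fun n _ => hR.measurable n
  have hSq : Integrable (fun ω => (∑ n ∈ range N, R n ω) ^ 2) μ :=
    .of_bound (hS.pow_const 2).aestronglyMeasurable (N ^ 2) (.of_forall fun ω => by
      simpa using pow_le_pow_left₀ (abs_nonneg _) (hR.abs_sum_le N ω) 2)
  have hsqrt : 0 < √(N : ℝ) := Real.sqrt_pos.mpr (by exact_mod_cast hN)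
  -- AM-GM: `2 √N |S| ≤ S² + N` for `S = ∑ n < N, R n`
  have hamgm : ∫ ω, 2 * √N * |∑ n ∈ range N, R n ω| ∂μ
      ≤ ∫ ω, ((∑ n ∈ range N, R n ω) ^ 2 + N) ∂μ :=
    integral_mono ((hR.integrable_abs_sum N).const_mul _) (hSq.add (integrable_const _)) fun ω => by
      nlinarith [sq_nonneg (|∑ n ∈ range N, R n ω| - √N), sq_abs (∑ n ∈ range N, R n ω),
        Real.sq_sqrt (Nat.cast_nonneg (α := ℝ) N)]
  rw [integral_const_mul, integral_add hSq (integrable_const _), hR.integral_sum_sq] at hamgm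
  simp only [integral_const, probReal_univ, one_smul] at hamgm
  nlinarith [Real.sq_sqrt (Nat.cast_nonneg (α := ℝ) N)]

theorem sub_sqrt_le_sum_integral_abs_sub (hR : OrthogonalSigns μ R) {Z : Ω → ℝ}
    (hZ : Integrable Z μ) (N : ℕ) :
    N - √N ≤ ∑ n ∈ range N, ∫ ω, |Z ω - R n ω| ∂μ := by
  have hS := hR.integrable_abs_sum N
  have hZR : ∀ n, Integrable (fun ω => |Z ω - R n ω|) μ := fun n =>
    (hZ.sub ((hR.memLp n 1).integrable le_rfl)).abs
  rw [← integral_finsetSum _ fun n _ => hZR n]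
  calc (N : ℝ) - √N ≤ ∫ ω, (N - |∑ n ∈ range N, R n ω|) ∂μ := by
        rw [integral_sub (integrable_const _) hS]
        simp only [integral_const, probReal_univ, one_smul]
        linarith [hR.integral_abs_sum_le N]
    _ ≤ ∫ ω, ∑ n ∈ range N, |Z ω - R n ω| ∂μ :=
        integral_mono ((integrable_const _).sub hS) (integrable_finsetSum _ fun n _ => hZR n)
          fun ω => card_sub_abs_sum_le_sum_abs_sub (Z ω) (hR.eq_one_or_eq_neg_one · ω) N

theorem exists_le_norm_sub_toLp (hR : OrthogonalSigns μ R) {p : ℝ≥0∞} [Fact (1 ≤ p)]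
    (Z : Lp ℝ p μ) {t : ℝ} (ht : t < 1) : ∃ n, t ≤ ‖Z - (hR.memLp n p).toLp (R n)‖ := by
  have h1t : 0 < 1 - t := by linarith
  obtain ⟨N, hN⟩ := exists_nat_gt (1 / (1 - t) ^ 2)
  have hsqrt : 1 / (1 - t) < √N := by
    rwa [Real.lt_sqrt (by positivity), div_pow, one_pow]
  have hs : 0 < √(N : ℝ) := lt_trans (by positivity) hsqrt
  have hsum : ∑ _n ∈ range N, (1 - 1 / √N) = (N : ℝ) - √N := by
    rw [sum_const, card_range, nsmul_eq_mul, mul_sub, mul_one, mul_one_div, Real.div_sqrt]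
  obtain ⟨n, -, hn⟩ := exists_le_of_sum_le (nonempty_range_iff.mpr (by rintro rfl; simp at hs))
    (hsum.trans_le (hR.sub_sqrt_le_sum_integral_abs_sub ((Lp.memLp Z).integrable Fact.out) N))
  refine ⟨n, ?_⟩
  calc t ≤ 1 - 1 / √N := by linarith [(one_div_lt h1t hs).mp hsqrt]
    _ ≤ ∫ ω, |Z ω - R n ω| ∂μ := hn
    _ ≤ _ := Lp.integral_norm_sub_le_norm_sub_toLp Z _

theorem norm_toLp_sub_toLp (hR : OrthogonalSigns μ R) {p : ℝ≥0∞} [Fact (1 ≤ p)] (hp : p ≠ ∞)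
    {i j : ℕ} (hij : i ≠ j) :
    ‖(hR.memLp i p).toLp (R i) - (hR.memLp j p).toLp (R j)‖ = 2 ^ (1 - p.toReal⁻¹) := by
  have hq : 1 ≤ p.toReal := by simpa using ENNReal.toReal_mono hp (Fact.out : 1 ≤ p)
  have hint : ∫ ω, ‖(R i - R j) ω‖ ^ p.toReal ∂μ = 2 ^ (p.toReal - 1) := by
    simp_rw [Pi.sub_apply, Real.norm_eq_abs, abs_sub_rpow_eq (hR.eq_one_or_eq_neg_one i _)
      (hR.eq_one_or_eq_neg_one j _) (by linarith)]
    rw [integral_const_mul, integral_sub (integrable_const 1) (hR.integrable_mul i j),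
      hR.integral_mul_eq_zero hij]
    simp
  rw [← MemLp.toLp_sub, Lp.norm_toLp, MemLp.eLpNorm_eq_integral_rpow_norm
    (zero_lt_one.trans_le Fact.out).ne' hp ((hR.memLp i p).sub (hR.memLp j p)), hint,
    ENNReal.toReal_ofReal (by positivity), ← Real.rpow_mul zero_le_two]
  congr 1
  field_simp

end OrthogonalSigns

theorem rpow_le_mul_of_extProp {X : Type*} [SeminormedAddGroup X] {Ω : Type*} [MeasurableSpace Ω]
    {μ : Measure Ω} [IsProbabilityMeasure μ] {R : ℕ → Ω → ℝ} (hR : OrthogonalSigns μ R)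
    {p : ℝ≥0∞} [Fact (1 ≤ p)] (hp : p ≠ ∞) {α l r : ℝ} (hα : 0 < α) (hr : 0 < r)
    {x : ℕ → X} (hx : ∀ n, ‖x n‖ ≤ 1) (hsep : ∀ n m, n ≠ m → r ≤ ‖x n - x m‖)
    (hext : ExtProp l α X (Lp ℝ p μ)) :
    r ^ α ≤ l * 2 ^ (1 - p.toReal⁻¹) := by
  set e : ℕ → Lp ℝ p μ := fun n => (hR.memLp n p).toLp (R n)
  have hrα : 0 < r ^ α := Real.rpow_pos_of_pos hr α
  have hinj : Function.Injective x := fun i j hij => by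
    by_contra hne
    simpa [hij] using (hsep i j hne).trans_lt' hr
  set f : X → Lp ℝ p μ := fun y => r ^ α • e (Function.invFun x y)
  have hfx : ∀ i, f (x i) = r ^ α • e i := fun i => by
    simp only [f, Function.leftInverse_invFun hinj i]
  have hf : HolderOnR (2 ^ (1 - p.toReal⁻¹)) α f (range x) := by
    rintro _ ⟨i, rfl⟩ _ ⟨j, rfl⟩
    rw [hfx, hfx, ← smul_sub, norm_smul, Real.norm_of_nonneg hrα.le]
    rcases eq_or_ne i j with rfl | hij
    · simp only [sub_self, norm_zero, mul_zero]
      positivity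
    · rw [hR.norm_toLp_sub_toLp hp hij, mul_comm]
      gcongr
      exact hsep i j hij
  obtain ⟨F, hFf, K, hK, hFK, hKl⟩ := hext _ f _ (by positivity) hf
  have hF0 : ∀ i, ‖F 0 - r ^ α • e i‖ ≤ K := fun i => by
    rw [← hfx, ← hFf (mem_range_self i)]
    refine (hFK 0 (x i)).trans (mul_le_of_le_one_right hK ?_)
    rw [zero_sub, norm_neg]
    exact Real.rpow_le_one (norm_nonneg _) (hx i) hα.le
  refine le_trans ?_ hKl
  refine le_of_forall_lt_imp_le_of_dense fun s hs => ?_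
  obtain ⟨n, hn⟩ := hR.exists_le_norm_sub_toLp ((r ^ α)⁻¹ • F 0) ((div_lt_one hrα).mpr hs)
  calc s = r ^ α * (s / r ^ α) := by field_simp
    _ ≤ r ^ α * ‖(r ^ α)⁻¹ • F 0 - e n‖ := by gcongr
    _ = ‖F 0 - r ^ α • e n‖ := by
        conv_rhs => rw [← smul_inv_smul₀ hrα.ne' (F 0), ← smul_sub, norm_smul,
          Real.norm_of_nonneg hrα.le]
    _ ≤ K := hF0 n

/-- The Rademacher function usually written `r_{n+1}`; with this indexing every
`rademacher n` is `1`-periodic. -/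
def rademacher (n : ℕ) (t : ℝ) : ℝ := (-1) ^ ⌊2 ^ (n + 1) * t⌋

theorem rademacher_eq_one_or_eq_neg_one (n : ℕ) (t : ℝ) :
    rademacher n t = 1 ∨ rademacher n t = -1 :=
  (Int.even_or_odd _).imp Even.neg_one_zpow Odd.neg_one_zpow

theorem measurable_rademacher (n : ℕ) : Measurable (rademacher n) :=
  measurable_from_top.comp ((measurable_const_mul (2 ^ (n + 1) : ℝ)).floor)

theorem rademacher_add_intCast_div (n : ℕ) (k : ℤ) (t : ℝ) :
    rademacher n (t + k / 2 ^ (n + 1)) = (-1) ^ k * rademacher n t := by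
  have h : (2 : ℝ) ^ (n + 1) * (t + k / 2 ^ (n + 1)) = 2 ^ (n + 1) * t + k := by
    field_simp
  rw [rademacher, rademacher, h, Int.floor_add_intCast, zpow_add₀ (by norm_num), mul_comm]

theorem rademacher_periodic (n : ℕ) : Function.Periodic (rademacher n) 1 := fun t => by
  have h := rademacher_add_intCast_div n (2 ^ (n + 1)) t
  rwa [Int.cast_pow, Int.cast_ofNat, div_self (by positivity),
    Even.neg_one_zpow ((even_two.pow_of_ne_zero n.succ_ne_zero)), one_mul] at h

theorem rademacher_add_half_period (n : ℕ) (t : ℝ) :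
    rademacher n (t + 1 / 2 ^ (n + 1)) = -rademacher n t := by
  simpa using rademacher_add_intCast_div n 1 t

theorem rademacher_add_half_period_of_lt {n m : ℕ} (hnm : n < m) (t : ℝ) :
    rademacher m (t + 1 / 2 ^ (n + 1)) = rademacher m t := by
  obtain ⟨d, rfl⟩ := Nat.exists_eq_add_of_lt hnm
  have h := rademacher_add_intCast_div (n + d + 1) (2 ^ (d + 1)) t
  have hk : ((2 ^ (d + 1) : ℤ) : ℝ) / 2 ^ (n + d + 1 + 1) = 1 / 2 ^ (n + 1) := by
    rw [Int.cast_pow, Int.cast_ofNat, div_eq_div_iff (by positivity) (by positivity), ← pow_add]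
    ring_nf
  rwa [hk, Even.neg_one_zpow (even_two.pow_of_ne_zero d.succ_ne_zero), one_mul] at h

theorem intervalIntegral_rademacher_mul {n m : ℕ} (hnm : n ≠ m) :
    ∫ t in (0 : ℝ)..1, rademacher n t * rademacher m t = 0 := by
  wlog hlt : n < m generalizing n m
  · simp_rw [mul_comm (rademacher n _)]
    exact this hnm.symm (hnm.lt_or_gt.resolve_left hlt)
  set g := fun t => rademacher n t * rademacher m t
  have hg : Function.Periodic g 1 := fun t => by
    simp only [g, rademacher_periodic n t, rademacher_periodic m t]
  have hshift : ∀ t, g (t + 1 / 2 ^ (n + 1)) = -g t := fun t => by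
    simp only [g, rademacher_add_half_period, rademacher_add_half_period_of_lt hlt, neg_mul]
  have h := intervalIntegral.integral_comp_add_right g (1 / 2 ^ (n + 1)) (a := 0) (b := 1)
  rw [zero_add, add_comm 1, hg.intervalIntegral_add_eq _ 0, zero_add] at h
  simp only [hshift, intervalIntegral.integral_neg] at h
  linarith

theorem orthogonalSigns_rademacher :
    OrthogonalSigns (volume : Measure (Icc (0 : ℝ) 1)) fun n t => rademacher n t where
  measurable n := (measurable_rademacher n).comp measurable_subtype_coe
  eq_one_or_eq_neg_one n t := rademacher_eq_one_or_eq_neg_one n t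
  integral_mul_eq_zero n m hnm := by
    dsimp only
    rw [integral_subtype measurableSet_Icc (fun t => rademacher n t * rademacher m t),
      integral_Icc_eq_integral_Ioc, ← intervalIntegral.integral_of_le zero_le_one]
    exact intervalIntegral_rademacher_mul hnm

theorem statement15_general (X : Type*) [NormedAddCommGroup X] (α q : ℝ) (hα0 : 0 < α)
    (hq1 : 1 < q) :
    haveI : Fact (1 ≤ ENNReal.ofReal q) := ⟨ENNReal.one_le_ofReal.mpr hq1.le⟩
    ENNReal.ofReal ((2 : ℝ) ^ (-(1 / (q / (q - 1)))) * kottman X ^ α) ≤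
      holderExt α X
        (MeasureTheory.Lp ℝ (ENNReal.ofReal q)
          (MeasureTheory.volume : MeasureTheory.Measure (Set.Icc (0:ℝ) 1))) := by
  have : Fact (1 ≤ ENNReal.ofReal q) := ⟨ENNReal.one_le_ofReal.mpr hq1.le⟩
  refine le_sInf ?_
  rintro _ ⟨l, hl, rfl, hext⟩
  have hq : (ENNReal.ofReal q).toReal = q := ENNReal.toReal_ofReal (by linarith)
  have hκ : kottman X ^ α ≤ l * 2 ^ (1 - q⁻¹) :=
    kottman_rpow_le hα0 (by positivity) fun r hr x hx hsep => hq ▸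
      rpow_le_mul_of_extProp orthogonalSigns_rademacher ENNReal.ofReal_ne_top hα0 hr hx hsep hext
  have hexp : -(1 / (q / (q - 1))) = -(1 - q⁻¹) := by field_simp
  refine ENNReal.ofReal_le_ofReal ?_
  rw [hexp, Real.rpow_neg zero_le_two, inv_mul_le_iff₀ (by positivity), mul_comm]
  exact hκ

/-- For every infinite-dimensional Banach space `X`, `1 < q ≤ 2` and `α ∈ (0,1]`,
`2^{-1/q*} κ(X)^α ≤ λ_α(X, L_q)`, where `q* = q/(q-1)` is the conjugate exponent. -/
theorem statement15 (X : Type*) [NormedAddCommGroup X] [NormedSpace ℝ X] [CompleteSpace X]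
    (hX : ¬ FiniteDimensional ℝ X) (α q : ℝ) (hα0 : 0 < α) (hα1 : α ≤ 1)
    (hq1 : 1 < q) (hq2 : q ≤ 2) :
    haveI : Fact (1 ≤ ENNReal.ofReal q) := ⟨ENNReal.one_le_ofReal.mpr hq1.le⟩
    ENNReal.ofReal ((2 : ℝ) ^ (-(1 / (q / (q - 1)))) * kottman X ^ α) ≤
      holderExt α X
        (MeasureTheory.Lp ℝ (ENNReal.ofReal q)
          (MeasureTheory.volume : MeasureTheory.Measure (Set.Icc (0:ℝ) 1))) :=
  statement15_general X α q hα0 hq1
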